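/- For all u, z ∈ ℝ and v > 0, Re(ψ(v+iu) − ψ(−ζ−iz)) = μ(v+ζ) + (v² + z² − u²)σ²/2 + R₁(u,v,z) + R₂(u,v,z) + R₃(u,v,z) + R₄(u,v,z) + R₅(u,v,z), where R₁ is ō(z²−u²); R₂ ≥ 0 and R₂ is ō(uv); R₃ ≥ 0 and R₃ is ō(v²); R₄ is ō(z); and R₅ is uniformly bounded over all u, z ∈ ℝ, v > 0. -/

import Mathlib

open MeasureTheory Filter Set Complex
open scoped ENNReal

/-- The Laplace exponent of the spectrally negative Lévy process with triplet `(μ, σ, ν)`. -/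
noncomputable def psi (μ σ : ℝ) (ν : Measure ℝ) (l : ℂ) : ℂ :=
  (μ : ℂ) * l + ((σ : ℂ) ^ 2 / 2) * l ^ 2 +
    ∫ x : ℝ, (Complex.exp (l * (x : ℂ)) - 1 - l * (x : ℂ)) ∂ν

/-- `IsRem R f` : the remainder `R(u,v,z)` is `ō(f(u,v,z))`, i.e. `|R| ≤ C |f|` uniformly over
`u, z ∈ ℝ`, `v > 0`, and `|R|/|f| → 0` as `|f| → ∞`. -/
def IsRem (R f : ℝ → ℝ → ℝ → ℝ) : Prop :=
  (∃ C : ℝ, ∀ (u z : ℝ) (v : ℝ), 0 < v → |R u v z| ≤ C * |f u v z|) ∧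
  (∀ δ : ℝ, 0 < δ → ∃ M : ℝ, 0 < M ∧
    ∀ (u z : ℝ) (v : ℝ), 0 < v → M ≤ |f u v z| → |R u v z| ≤ δ * |f u v z|)

open scoped Topology

/-!
Subtracting the two Lévy–Khintchine integrands and regrouping, `Re(ψ(v+iu) − ψ(−ζ−iz))` is the
drift and Gaussian part, plus the integrals against `Π` of `cos ux − cos zx`,
`(1 − e^{vx})(1 − cos ux)`, `e^{vx} − 1 − vx` and `(e^{−ζx} − 1)(1 − cos zx)`, plus the constant
`−σ²ζ²/2 − ∫ (e^{−ζx} − 1 + ζx) dΠ`. Each of the four integrands is bounded by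
`|f| · min(h/|f|, g)`, where `f` is the size it should be `ō` of and `g` is `Π`-integrable (for
`e^{vx} − 1 − vx` use `v² · min(|x|/v, x²)` instead); by dominated convergence
`∫ min(h/s, g) dΠ → 0` as `s → ∞`, which is exactly the `ō(f)` property.
-/
section SmallRemainder

variable {α : Type*} [MeasurableSpace α] {ν : Measure α} {g h : α → ℝ}

lemma tendsto_integral_min_div_atTop (hg : Integrable g ν) (hh : AEMeasurable h ν)
    (hg0 : ∀ x, 0 ≤ g x) (hh0 : ∀ x, 0 ≤ h x) :
    Tendsto (fun s : ℝ => ∫ x, min (h x / s) (g x) ∂ν) atTop (𝓝 0) := by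
  have hlim : ∀ x, Tendsto (fun s : ℝ => min (h x / s) (g x)) atTop (𝓝 0) := fun x => by
    simpa [min_eq_left (hg0 x)] using (tendsto_const_nhds.div_atTop tendsto_id).min
      (tendsto_const_nhds (x := g x))
  simpa using tendsto_integral_filter_of_dominated_convergence g
    (Eventually.of_forall fun s => ((hh.div_const s).min hg.aemeasurable).aestronglyMeasurable)
    ((eventually_ge_atTop (0 : ℝ)).mono fun s hs => ae_of_all _ fun x => by
      rw [Real.norm_eq_abs, abs_of_nonneg (le_min (div_nonneg (hh0 x) hs) (hg0 x))]
      exact min_le_right _ _)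
    hg (ae_of_all _ hlim)

lemma isRem_integral_of_le_mul_min_div {S : ℝ → ℝ} {f : ℝ → ℝ → ℝ → ℝ}
    {r : ℝ → ℝ → ℝ → α → ℝ} (hg : Integrable g ν) (hh : AEMeasurable h ν)
    (hg0 : ∀ x, 0 ≤ g x) (hh0 : ∀ x, 0 ≤ h x) (hS : Tendsto S atTop atTop)
    (hr : ∀ u z v, 0 < v →
      ∀ᵐ x ∂ν, |r u v z x| ≤ |f u v z| * min (h x / S |f u v z|) (g x)) :
    IsRem (fun u v z => ∫ x, r u v z x ∂ν) f := by
  refine ⟨⟨∫ x, g x ∂ν, fun u z v hv => ?_⟩, fun δ hδ => ?_⟩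
  · calc |∫ x, r u v z x ∂ν| ≤ ∫ x, |f u v z| * g x ∂ν :=
          norm_integral_le_of_norm_le (f := r u v z) (hg.const_mul _)
            ((hr u z v hv).mono fun x hx =>
              hx.trans (mul_le_mul_of_nonneg_left (min_le_right _ _) (abs_nonneg _)))
      _ = (∫ x, g x ∂ν) * |f u v z| := by rw [integral_const_mul, mul_comm]
  obtain ⟨s₀, hs₀⟩ := eventually_atTop.1 <|
    (tendsto_integral_min_div_atTop hg hh hg0 hh0).eventually (eventually_le_nhds hδ)
  obtain ⟨M, hM⟩ := eventually_atTop.1 <| hS.eventually (eventually_ge_atTop (max s₀ 1))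
  refine ⟨max M 1, by positivity, fun u z v hv hf => ?_⟩
  have hSf := hM _ (le_of_max_le_left hf)
  have hSpos : 0 < S |f u v z| := lt_of_lt_of_le one_pos (le_of_max_le_right hSf)
  calc |∫ x, r u v z x ∂ν| ≤ ∫ x, |f u v z| * min (h x / S |f u v z|) (g x) ∂ν := by
        refine norm_integral_le_of_norm_le (f := r u v z) ((hg.mono'
          ((hh.div_const _).min hg.aemeasurable).aestronglyMeasurable
          (ae_of_all _ fun x => ?_)).const_mul _) (hr u z v hv)
        rw [Real.norm_eq_abs, abs_of_nonneg (le_min (div_nonneg (hh0 x) hSpos.le) (hg0 x))]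
        exact min_le_right _ _
    _ ≤ δ * |f u v z| := by
        rw [integral_const_mul, mul_comm]
        exact mul_le_mul_of_nonneg_right (hs₀ _ (le_of_max_le_left hSf)) (abs_nonneg _)

lemma isRem_integral_of_le_min {f : ℝ → ℝ → ℝ → ℝ} {r : ℝ → ℝ → ℝ → α → ℝ}
    (hg : Integrable g ν) (hh : AEMeasurable h ν)
    (hg0 : ∀ x, 0 ≤ g x) (hh0 : ∀ x, 0 ≤ h x)
    (hr : ∀ u z v, 0 < v → ∀ᵐ x ∂ν, |r u v z x| ≤ min (h x) (|f u v z| * g x)) :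
    IsRem (fun u v z => ∫ x, r u v z x ∂ν) f := by
  refine isRem_integral_of_le_mul_min_div hg hh hg0 hh0 tendsto_id fun u z v hv => ?_
  filter_upwards [hr u z v hv] with x hx
  rcases (abs_nonneg (f u v z)).eq_or_lt with h0 | hpos
  · simpa [← h0, min_eq_right (hh0 x)] using hx
  · rwa [id, mul_min_of_nonneg _ _ hpos.le, mul_div_cancel₀ _ hpos.ne']

end SmallRemainder

namespace Real

lemma abs_cos_sub_cos_le_abs_sq_sub_sq (a b : ℝ) : |cos a - cos b| ≤ |a ^ 2 - b ^ 2| / 2 := by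
  have h₁ : |sin ((a + b) / 2)| ≤ |(a + b) / 2| := abs_sin_le_abs
  have h₂ : |sin ((a - b) / 2)| ≤ |(a - b) / 2| := abs_sin_le_abs
  calc |cos a - cos b| = 2 * (|sin ((a + b) / 2)| * |sin ((a - b) / 2)|) := by
        rw [cos_sub_cos, abs_mul, abs_mul, abs_neg, abs_two, mul_assoc]
    _ ≤ 2 * (|(a + b) / 2| * |(a - b) / 2|) := by gcongr
    _ = |a ^ 2 - b ^ 2| / 2 := by
        rw [← abs_mul, show (a + b) / 2 * ((a - b) / 2) = (a ^ 2 - b ^ 2) / 4 by ring, abs_div,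
          abs_of_pos (by norm_num : (0 : ℝ) < 4)]
        ring

lemma one_sub_cos_le_abs (t : ℝ) : 1 - cos t ≤ |t| := by
  simpa using (le_abs_self _).trans (abs_cos_sub_cos_le 0 t)

lemma exp_sub_one_le_mul_exp (y : ℝ) : exp y - 1 ≤ y * exp y := by
  have := mul_le_mul_of_nonneg_left (add_one_le_exp (-y)) (exp_pos y).le
  rw [← exp_add, add_neg_cancel, exp_zero] at this
  linarith

lemma exp_sub_one_sub_le_sq_of_nonpos {t : ℝ} (ht : t ≤ 0) : exp t - 1 - t ≤ t ^ 2 := by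
  nlinarith [exp_sub_one_le_mul_exp t, add_one_le_exp t]

lemma exp_sub_one_sub_le_mul_exp_sub_one (y : ℝ) : exp y - 1 - y ≤ y * (exp y - 1) := by
  linarith [exp_sub_one_le_mul_exp y]

end Real

section LevyMeasure

variable {ν : Measure ℝ} {ζ : ℝ}

lemma ae_lt_zero_of_measure_Ici_eq_zero (h : ν (Ici 0) = 0) : ∀ᵐ x ∂ν, x < 0 := by
  rw [ae_iff]
  simp only [not_lt]
  exact h

lemma integrable_of_integrableOn_Iio_Ici {E : Type*} [NormedAddCommGroup E] {f : ℝ → E} {a : ℝ}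
    (h₁ : IntegrableOn f (Iio a) ν) (h₂ : IntegrableOn f (Ici a) ν) : Integrable f ν := by
  rw [← integrableOn_univ, ← Iio_union_Ici (a := a)]
  exact h₁.union h₂

lemma integrable_abs_exp_sub_one_mul_abs (hζ : 0 ≤ ζ) (hsupp : ν (Ici 0) = 0)
    (hν2 : Integrable (fun x : ℝ => x ^ 2) ν)
    (hνexp : IntegrableOn (fun x : ℝ => |x| * Real.exp (-ζ * x)) (Iio (-1)) ν) :
    Integrable (fun x => |Real.exp (-ζ * x) - 1| * |x|) ν := by
  have hmeas : AEStronglyMeasurable (fun x => |Real.exp (-ζ * x) - 1| * |x|) ν := by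
    fun_prop
  refine integrable_of_integrableOn_Iio_Ici (a := -1) (hνexp.mono' hmeas.restrict ?_)
    ((hν2.const_mul (ζ * Real.exp ζ)).restrict.mono' hmeas.restrict ?_)
  · filter_upwards [ae_restrict_mem measurableSet_Iio] with x (hx : x < -1)
    have h1 : 1 ≤ Real.exp (-ζ * x) := Real.one_le_exp (by nlinarith)
    rw [Real.norm_eq_abs, abs_of_nonneg (by positivity), abs_of_nonneg (by linarith),
      abs_of_neg (by linarith)]
    nlinarith
  · filter_upwards [ae_restrict_mem measurableSet_Ici,
      ae_restrict_of_ae (ae_lt_zero_of_measure_Ici_eq_zero hsupp)] with x (hx : -1 ≤ x) hx0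
    have h1 : 1 ≤ Real.exp (-ζ * x) := Real.one_le_exp (by nlinarith)
    have h2 : Real.exp (-ζ * x) ≤ Real.exp ζ := Real.exp_le_exp.2 (by nlinarith)
    have h3 := Real.exp_sub_one_le_mul_exp (-ζ * x)
    rw [Real.norm_eq_abs, abs_of_nonneg (by positivity), abs_of_nonneg (by linarith),
      abs_of_neg hx0]
    calc (Real.exp (-ζ * x) - 1) * -x ≤ (-ζ * x * Real.exp (-ζ * x)) * -x := by gcongr; linarith
      _ ≤ ζ * Real.exp ζ * x ^ 2 := by nlinarith [mul_nonneg hζ (sq_nonneg x)]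

lemma integrable_cexp_sub_one_sub (hζ : 0 ≤ ζ) (hsupp : ν (Ici 0) = 0)
    (hν2 : Integrable (fun x : ℝ => x ^ 2) ν)
    (hνexp : IntegrableOn (fun x : ℝ => |x| * Real.exp (-ζ * x)) (Iio (-1)) ν)
    {l : ℂ} (hl : -ζ ≤ l.re) :
    Integrable (fun x : ℝ => cexp (l * x) - 1 - l * x) ν := by
  have hmeas : AEStronglyMeasurable (fun x : ℝ => cexp (l * x) - 1 - l * x) ν := by fun_prop
  have hnorm_mul : ∀ x : ℝ, ‖l * x‖ = ‖l‖ * |x| := fun x => by simp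
  have hnorm_exp : ∀ x : ℝ, ‖cexp (l * x)‖ = Real.exp (l.re * x) := fun x => by
    simp [Complex.norm_exp]
  refine integrable_of_integrableOn_Iio_Ici (a := -1)
    ((hνexp.const_mul (2 + ‖l‖)).mono' hmeas.restrict ?_)
    ((hν2.const_mul (‖l‖ ^ 2 * Real.exp ‖l‖)).restrict.mono' hmeas.restrict ?_)
  · filter_upwards [ae_restrict_mem measurableSet_Iio] with x (hx : x < -1)
    have h1 : ‖cexp (l * x) - 1 - l * x‖ ≤ Real.exp (l.re * x) + 1 + ‖l‖ * |x| := by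
      rw [← hnorm_exp, ← hnorm_mul]
      exact (norm_sub_le _ _).trans (by gcongr; simpa using norm_sub_le (cexp (l * x)) 1)
    have h2 : Real.exp (l.re * x) ≤ Real.exp (-ζ * x) := Real.exp_le_exp.2 (by nlinarith)
    have h3 : 1 ≤ Real.exp (-ζ * x) := Real.one_le_exp (by nlinarith)
    have h4 : 1 ≤ |x| := by rw [abs_of_neg (by linarith)]; linarith
    have h5 : Real.exp (-ζ * x) ≤ |x| * Real.exp (-ζ * x) :=
      le_mul_of_one_le_left (by positivity) h4
    have h6 : ‖l‖ * |x| ≤ ‖l‖ * (|x| * Real.exp (-ζ * x)) := by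
      gcongr
      exact le_mul_of_one_le_right (abs_nonneg x) h3
    linarith
  · filter_upwards [ae_restrict_mem measurableSet_Ici,
      ae_restrict_of_ae (ae_lt_zero_of_measure_Ici_eq_zero hsupp)] with x (hx : -1 ≤ x) hx0
    have hx1 : |x| ≤ 1 := abs_le.2 ⟨hx, by linarith⟩
    have h1 := Complex.norm_exp_sub_sum_le_norm_mul_exp (l * x) 2
    simp only [Finset.sum_range_succ, Finset.sum_range_zero, pow_zero, pow_one,
      Nat.factorial_zero, Nat.factorial_one, Nat.cast_one, div_one, zero_add, hnorm_mul] at h1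
    rw [← sub_sub] at h1
    refine h1.trans ?_
    have h2 : Real.exp (‖l‖ * |x|) ≤ Real.exp ‖l‖ :=
      Real.exp_le_exp.2 (mul_le_of_le_one_right (norm_nonneg l) hx1)
    rw [mul_pow, sq_abs]
    calc ‖l‖ ^ 2 * x ^ 2 * Real.exp (‖l‖ * |x|) ≤ ‖l‖ ^ 2 * x ^ 2 * Real.exp ‖l‖ := by gcongr
      _ = ‖l‖ ^ 2 * Real.exp ‖l‖ * x ^ 2 := by ring

lemma re_cexp_mul_sub_one_sub (l : ℂ) (x : ℝ) :
    (cexp (l * x) - 1 - l * x).re = Real.exp (l.re * x) * Real.cos (l.im * x) - 1 - l.re * x := by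
  simp [Complex.exp_re, Complex.mul_re, Complex.mul_im]

lemma integrable_re_cexp_mul_sub_one_sub {l : ℂ}
    (hl : Integrable (fun x : ℝ => cexp (l * x) - 1 - l * x) ν) :
    Integrable (fun x => Real.exp (l.re * x) * Real.cos (l.im * x) - 1 - l.re * x) ν :=
  hl.re.congr (ae_of_all _ fun x => re_cexp_mul_sub_one_sub l x)

lemma re_integral_cexp_sub_one_sub {l : ℂ}
    (hl : Integrable (fun x : ℝ => cexp (l * x) - 1 - l * x) ν) :
    (∫ x : ℝ, (cexp (l * x) - 1 - l * x) ∂ν).re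
      = ∫ x, (Real.exp (l.re * x) * Real.cos (l.im * x) - 1 - l.re * x) ∂ν := by
  rw [← RCLike.re_to_complex, ← integral_re hl]
  exact integral_congr_ae (ae_of_all _ fun x => re_cexp_mul_sub_one_sub l x)

lemma re_psi (μ σ : ℝ) {l : ℂ} (hl : Integrable (fun x : ℝ => cexp (l * x) - 1 - l * x) ν) :
    (psi μ σ ν l).re = μ * l.re + σ ^ 2 / 2 * (l.re ^ 2 - l.im ^ 2)
      + ∫ x, (Real.exp (l.re * x) * Real.cos (l.im * x) - 1 - l.re * x) ∂ν := by
  rw [psi, Complex.add_re, re_integral_cexp_sub_one_sub hl]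
  congr 1
  simp [Complex.mul_re, sq]

end LevyMeasure

lemma abs_cos_sub_cos_le_min (u z x : ℝ) :
    |Real.cos (u * x) - Real.cos (z * x)| ≤ min 2 (|z ^ 2 - u ^ 2| * (x ^ 2 / 2)) := by
  refine le_min ?_ ((Real.abs_cos_sub_cos_le_abs_sq_sub_sq _ _).trans_eq ?_)
  · rw [abs_le]
    constructor <;> linarith [Real.neg_one_le_cos (u * x), Real.cos_le_one (u * x),
      Real.neg_one_le_cos (z * x), Real.cos_le_one (z * x)]
  · rw [show (u * x) ^ 2 - (z * x) ^ 2 = -((z ^ 2 - u ^ 2) * x ^ 2) by ring, abs_neg, abs_mul,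
      abs_of_nonneg (sq_nonneg x)]
    ring

lemma one_sub_exp_mul_one_sub_cos_nonneg {v x : ℝ} (hv : 0 ≤ v) (hx : x ≤ 0) (u : ℝ) :
    0 ≤ (1 - Real.exp (v * x)) * (1 - Real.cos (u * x)) :=
  mul_nonneg (sub_nonneg.2 (Real.exp_le_one_iff.2 (mul_nonpos_of_nonneg_of_nonpos hv hx)))
    (sub_nonneg.2 (Real.cos_le_one _))

lemma abs_one_sub_exp_mul_one_sub_cos_le_min {v x : ℝ} (hv : 0 ≤ v) (hx : x ≤ 0) (u : ℝ) :
    |(1 - Real.exp (v * x)) * (1 - Real.cos (u * x))| ≤ min 2 (|u * v| * x ^ 2) := by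
  rw [abs_of_nonneg (one_sub_exp_mul_one_sub_cos_nonneg hv hx u)]
  have ha₀ : 0 ≤ 1 - Real.exp (v * x) :=
    sub_nonneg.2 (Real.exp_le_one_iff.2 (mul_nonpos_of_nonneg_of_nonpos hv hx))
  have ha₁ : 1 - Real.exp (v * x) ≤ 1 := by linarith [Real.exp_pos (v * x)]
  have ha₂ : 1 - Real.exp (v * x) ≤ v * |x| := by
    rw [abs_of_nonpos hx]; linarith [Real.add_one_le_exp (v * x)]
  have hb₀ : 0 ≤ 1 - Real.cos (u * x) := sub_nonneg.2 (Real.cos_le_one _)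
  have hb₁ : 1 - Real.cos (u * x) ≤ 2 := by linarith [Real.neg_one_le_cos (u * x)]
  have hb₂ : 1 - Real.cos (u * x) ≤ |u| * |x| := (Real.one_sub_cos_le_abs _).trans_eq (abs_mul _ _)
  refine le_min (by nlinarith) ?_
  calc (1 - Real.exp (v * x)) * (1 - Real.cos (u * x)) ≤ (v * |x|) * (|u| * |x|) := by gcongr
    _ = |u * v| * x ^ 2 := by rw [abs_mul, abs_of_nonneg hv, ← sq_abs x]; ring

lemma abs_exp_sub_one_sub_le_mul_min {v x : ℝ} (hv : 0 < v) (hx : x ≤ 0) :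
    |Real.exp (v * x) - 1 - v * x| ≤ |v ^ 2| * min (|x| / √|v ^ 2|) (x ^ 2) := by
  have hvx : v * x ≤ 0 := mul_nonpos_of_nonneg_of_nonpos hv.le hx
  rw [abs_of_nonneg (by linarith [Real.add_one_le_exp (v * x)]), abs_of_nonneg (sq_nonneg v),
    Real.sqrt_sq hv.le, mul_min_of_nonneg _ _ (sq_nonneg v)]
  refine le_min ?_ ?_
  · calc Real.exp (v * x) - 1 - v * x ≤ -(v * x) := by
          linarith [Real.exp_le_one_iff.2 hvx]
      _ = v ^ 2 * (|x| / v) := by rw [abs_of_nonpos hx]; field_simp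
  · exact (Real.exp_sub_one_sub_le_sq_of_nonpos hvx).trans_eq (by ring)

lemma abs_exp_sub_one_mul_one_sub_cos_le_min (a z x : ℝ) :
    |(Real.exp a - 1) * (1 - Real.cos (z * x))|
      ≤ min (2 * |Real.exp a - 1|) (|z| * (|Real.exp a - 1| * |x|)) := by
  have hb₀ : 0 ≤ 1 - Real.cos (z * x) := sub_nonneg.2 (Real.cos_le_one _)
  rw [abs_mul, abs_of_nonneg hb₀]
  refine le_min ?_ ?_
  · nlinarith [Real.neg_one_le_cos (z * x), abs_nonneg (Real.exp a - 1)]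
  · calc |Real.exp a - 1| * (1 - Real.cos (z * x)) ≤ |Real.exp a - 1| * (|z| * |x|) := by
          gcongr
          exact (Real.one_sub_cos_le_abs _).trans_eq (abs_mul _ _)
      _ = |z| * (|Real.exp a - 1| * |x|) := by ring

lemma abs_exp_neg_mul_sub_one_add_le {ζ : ℝ} (hζ : 0 ≤ ζ) (x : ℝ) :
    |Real.exp (-ζ * x) - 1 + ζ * x| ≤ ζ * (|Real.exp (-ζ * x) - 1| * |x|) := by
  have h := Real.exp_sub_one_sub_le_mul_exp_sub_one (-ζ * x)
  have hsign : 0 ≤ -ζ * x * (Real.exp (-ζ * x) - 1) := by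
    rcases le_total 0 (-ζ * x) with hy | hy
    · exact mul_nonneg hy (sub_nonneg.2 (Real.one_le_exp hy))
    · exact mul_nonneg_of_nonpos_of_nonpos hy (sub_nonpos.2 (Real.exp_le_one_iff.2 hy))
  rw [abs_of_nonneg (by linarith [Real.add_one_le_exp (-ζ * x)])]
  calc Real.exp (-ζ * x) - 1 + ζ * x ≤ |-ζ * x * (Real.exp (-ζ * x) - 1)| := by
        rw [abs_of_nonneg hsign]; linarith
    _ = ζ * (|Real.exp (-ζ * x) - 1| * |x|) := by
        rw [abs_mul, abs_mul, abs_neg, abs_of_nonneg hζ]; ring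

section Integrability

variable {ν : Measure ℝ} {ζ : ℝ}

lemma integrable_cos_sub_cos (hν2 : Integrable (fun x : ℝ => x ^ 2) ν) (u z : ℝ) :
    Integrable (fun x => Real.cos (u * x) - Real.cos (z * x)) ν :=
  ((hν2.div_const 2).const_mul |z ^ 2 - u ^ 2|).mono' (by fun_prop)
    (ae_of_all _ fun x => (abs_cos_sub_cos_le_min u z x).trans (min_le_right _ _))

lemma integrable_one_sub_exp_mul_one_sub_cos (hsupp : ν (Ici 0) = 0)
    (hν2 : Integrable (fun x : ℝ => x ^ 2) ν) (u : ℝ) {v : ℝ} (hv : 0 ≤ v) :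
    Integrable (fun x => (1 - Real.exp (v * x)) * (1 - Real.cos (u * x))) ν :=
  (hν2.const_mul |u * v|).mono' (by fun_prop)
    ((ae_lt_zero_of_measure_Ici_eq_zero hsupp).mono fun _ hx =>
      (abs_one_sub_exp_mul_one_sub_cos_le_min hv hx.le u).trans (min_le_right _ _))

lemma integrable_exp_sub_one_sub (hsupp : ν (Ici 0) = 0)
    (hν2 : Integrable (fun x : ℝ => x ^ 2) ν) {v : ℝ} (hv : 0 < v) :
    Integrable (fun x => Real.exp (v * x) - 1 - v * x) ν :=
  (hν2.const_mul |v ^ 2|).mono' (by fun_prop)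
    ((ae_lt_zero_of_measure_Ici_eq_zero hsupp).mono fun _ hx =>
      (abs_exp_sub_one_sub_le_mul_min hv hx.le).trans
        (mul_le_mul_of_nonneg_left (min_le_right _ _) (abs_nonneg _)))

lemma integrable_exp_neg_mul_sub_one_mul_one_sub_cos
    (hweight : Integrable (fun x => |Real.exp (-ζ * x) - 1| * |x|) ν) (z : ℝ) :
    Integrable (fun x => (Real.exp (-ζ * x) - 1) * (1 - Real.cos (z * x))) ν :=
  (hweight.const_mul |z|).mono' (by fun_prop)
    (ae_of_all _ fun x => (abs_exp_sub_one_mul_one_sub_cos_le_min _ z x).trans (min_le_right _ _))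

lemma integrable_exp_neg_mul_sub_one_add (hζ : 0 ≤ ζ)
    (hweight : Integrable (fun x => |Real.exp (-ζ * x) - 1| * |x|) ν) :
    Integrable (fun x => Real.exp (-ζ * x) - 1 + ζ * x) ν :=
  (hweight.const_mul ζ).mono' (by fun_prop)
    (ae_of_all _ fun x => abs_exp_neg_mul_sub_one_add_le hζ x)

end Integrability

section Remainders

variable {ν : Measure ℝ} {ζ : ℝ}

lemma isRem_integral_cos_sub_cos (hν2 : Integrable (fun x : ℝ => x ^ 2) ν) :
    IsRem (fun u _ z => ∫ x, (Real.cos (u * x) - Real.cos (z * x)) ∂ν)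
      (fun u _ z => z ^ 2 - u ^ 2) :=
  isRem_integral_of_le_min (hν2.div_const 2) aemeasurable_const (fun x => by positivity)
    (fun _ => zero_le_two) fun u z _ _ => ae_of_all _ fun x => abs_cos_sub_cos_le_min u z x

lemma isRem_integral_one_sub_exp_mul_one_sub_cos (hsupp : ν (Ici 0) = 0)
    (hν2 : Integrable (fun x : ℝ => x ^ 2) ν) :
    IsRem (fun u v _ => ∫ x, (1 - Real.exp (v * x)) * (1 - Real.cos (u * x)) ∂ν)
      (fun u v _ => u * v) :=
  isRem_integral_of_le_min hν2 aemeasurable_const (fun x => sq_nonneg x)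
    (fun _ => zero_le_two) fun u _ _ hv =>
      (ae_lt_zero_of_measure_Ici_eq_zero hsupp).mono fun _ hx =>
        abs_one_sub_exp_mul_one_sub_cos_le_min hv.le hx.le u

lemma isRem_integral_exp_sub_one_sub (hsupp : ν (Ici 0) = 0)
    (hν2 : Integrable (fun x : ℝ => x ^ 2) ν) :
    IsRem (fun _ v _ => ∫ x, (Real.exp (v * x) - 1 - v * x) ∂ν) (fun _ v _ => v ^ 2) :=
  isRem_integral_of_le_mul_min_div hν2 continuous_abs.aemeasurable (fun x => sq_nonneg x)
    (fun x => abs_nonneg x) Real.tendsto_sqrt_atTop fun _ _ _ hv =>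
      (ae_lt_zero_of_measure_Ici_eq_zero hsupp).mono fun _ hx =>
        abs_exp_sub_one_sub_le_mul_min hv hx.le

lemma isRem_integral_exp_neg_mul_sub_one_mul_one_sub_cos
    (hweight : Integrable (fun x => |Real.exp (-ζ * x) - 1| * |x|) ν) :
    IsRem (fun _ _ z => ∫ x, (Real.exp (-ζ * x) - 1) * (1 - Real.cos (z * x)) ∂ν)
      (fun _ _ z => z) :=
  isRem_integral_of_le_min hweight (by fun_prop) (fun x => by positivity)
    (fun x => by positivity) fun _ z _ _ =>
      ae_of_all _ fun x => abs_exp_sub_one_mul_one_sub_cos_le_min _ z x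

lemma integral_one_sub_exp_mul_one_sub_cos_nonneg (hsupp : ν (Ici 0) = 0)
    (u : ℝ) {v : ℝ} (hv : 0 ≤ v) :
    0 ≤ ∫ x, (1 - Real.exp (v * x)) * (1 - Real.cos (u * x)) ∂ν :=
  integral_nonneg_of_ae <| (ae_lt_zero_of_measure_Ici_eq_zero hsupp).mono fun _ hx =>
    one_sub_exp_mul_one_sub_cos_nonneg hv hx.le u

lemma integral_exp_sub_one_sub_nonneg (v : ℝ) :
    0 ≤ ∫ x, (Real.exp (v * x) - 1 - v * x) ∂ν :=
  integral_nonneg fun x => sub_nonneg.2 (by linarith [Real.add_one_le_exp (v * x)])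

end Remainders

lemma re_psi_sub_psi {ν : Measure ℝ} {ζ : ℝ} (μ σ : ℝ) (hζ : 0 ≤ ζ) (hsupp : ν (Ici 0) = 0)
    (hν2 : Integrable (fun x : ℝ => x ^ 2) ν)
    (hνexp : IntegrableOn (fun x : ℝ => |x| * Real.exp (-ζ * x)) (Iio (-1)) ν)
    (u z : ℝ) {v : ℝ} (hv : 0 < v) :
    (psi μ σ ν ((v : ℂ) + Complex.I * (u : ℂ)) - psi μ σ ν (-(ζ : ℂ) - Complex.I * (z : ℂ))).re
      = μ * (v + ζ) + (v ^ 2 + z ^ 2 - u ^ 2) * σ ^ 2 / 2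
        + ∫ x, (Real.cos (u * x) - Real.cos (z * x)) ∂ν
        + ∫ x, (1 - Real.exp (v * x)) * (1 - Real.cos (u * x)) ∂ν
        + ∫ x, (Real.exp (v * x) - 1 - v * x) ∂ν
        + ∫ x, (Real.exp (-ζ * x) - 1) * (1 - Real.cos (z * x)) ∂ν
        + (-(σ ^ 2 * ζ ^ 2 / 2) - ∫ x, (Real.exp (-ζ * x) - 1 + ζ * x) ∂ν) := by
  have hre₁ : ((v : ℂ) + Complex.I * u).re = v := by simp
  have him₁ : ((v : ℂ) + Complex.I * u).im = u := by simp
  have hre₂ : (-(ζ : ℂ) - Complex.I * z).re = -ζ := by simp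
  have him₂ : (-(ζ : ℂ) - Complex.I * z).im = -z := by simp
  have hl₁ := integrable_cexp_sub_one_sub hζ hsupp hν2 hνexp
    (l := (v : ℂ) + Complex.I * u) (by rw [hre₁]; linarith)
  have hl₂ := integrable_cexp_sub_one_sub hζ hsupp hν2 hνexp
    (l := -(ζ : ℂ) - Complex.I * z) hre₂.ge
  have hl₁re := integrable_re_cexp_mul_sub_one_sub hl₁
  have hl₂re := integrable_re_cexp_mul_sub_one_sub hl₂
  have hweight := integrable_abs_exp_sub_one_mul_abs hζ hsupp hν2 hνexp
  have h₁ := integrable_cos_sub_cos hν2 u z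
  have h₂ := integrable_one_sub_exp_mul_one_sub_cos hsupp hν2 u hv.le
  have h₃ := integrable_exp_sub_one_sub hsupp hν2 hv
  have h₄ := integrable_exp_neg_mul_sub_one_mul_one_sub_cos hweight z
  have h₅ := integrable_exp_neg_mul_sub_one_add hζ hweight
  rw [hre₁, him₁] at hl₁re
  rw [hre₂, him₂] at hl₂re
  have hsplit : ∫ x, (Real.exp (v * x) * Real.cos (u * x) - 1 - v * x) ∂ν
      - ∫ x, (Real.exp (-ζ * x) * Real.cos (-z * x) - 1 - -ζ * x) ∂ν
      = ∫ x, (Real.cos (u * x) - Real.cos (z * x)) ∂ν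
        + ∫ x, (1 - Real.exp (v * x)) * (1 - Real.cos (u * x)) ∂ν
        + ∫ x, (Real.exp (v * x) - 1 - v * x) ∂ν
        + (∫ x, (Real.exp (-ζ * x) - 1) * (1 - Real.cos (z * x)) ∂ν
          - ∫ x, (Real.exp (-ζ * x) - 1 + ζ * x) ∂ν) := by
    rw [← integral_sub hl₁re hl₂re, ← integral_sub' h₄ h₅, ← integral_add' h₁ h₂,
      ← integral_add' (h₁.add h₂) h₃, ← integral_add' ((h₁.add h₂).add h₃) (h₄.sub h₅)]
    refine integral_congr_ae (ae_of_all _ fun x => ?_)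
    simp only [Pi.add_apply, Pi.sub_apply, neg_mul, Real.cos_neg]
    ring
  rw [Complex.sub_re, re_psi μ σ hl₁, re_psi μ σ hl₂, hre₁, him₁, hre₂, him₂]
  linear_combination hsplit

theorem stmt_2_general (μ σ ζ : ℝ) (ν : Measure ℝ)
    (hζ : 0 ≤ ζ)
    (hνsupp : ν (Set.Ici (0 : ℝ)) = 0)
    (hν2 : Integrable (fun x : ℝ => x ^ 2) ν)
    (hνexp : IntegrableOn (fun x : ℝ => |x| * Real.exp (-ζ * x)) (Set.Iio (-1 : ℝ)) ν) :
    ∃ R₁ R₂ R₃ R₄ R₅ : ℝ → ℝ → ℝ → ℝ,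
      IsRem R₁ (fun u _ z => z ^ 2 - u ^ 2) ∧
      (∀ (u z : ℝ) (v : ℝ), 0 < v → 0 ≤ R₂ u v z) ∧
      IsRem R₂ (fun u v _ => u * v) ∧
      (∀ (u z : ℝ) (v : ℝ), 0 < v → 0 ≤ R₃ u v z) ∧
      IsRem R₃ (fun _ v _ => v ^ 2) ∧
      IsRem R₄ (fun _ _ z => z) ∧
      (∃ C : ℝ, ∀ (u z : ℝ) (v : ℝ), 0 < v → |R₅ u v z| ≤ C) ∧
      ∀ (u z : ℝ) (v : ℝ), 0 < v →
        (psi μ σ ν ((v : ℂ) + Complex.I * (u : ℂ)) -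
            psi μ σ ν (-(ζ : ℂ) - Complex.I * (z : ℂ))).re
          = μ * (v + ζ) + (v ^ 2 + z ^ 2 - u ^ 2) * σ ^ 2 / 2
            + R₁ u v z + R₂ u v z + R₃ u v z + R₄ u v z + R₅ u v z := by
  refine ⟨_, _, _, _, fun _ _ _ => -(σ ^ 2 * ζ ^ 2 / 2) - ∫ x, (Real.exp (-ζ * x) - 1 + ζ * x) ∂ν,
    isRem_integral_cos_sub_cos hν2,
    fun u _ _ hv => integral_one_sub_exp_mul_one_sub_cos_nonneg hνsupp u hv.le,
    isRem_integral_one_sub_exp_mul_one_sub_cos hνsupp hν2,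
    fun _ _ v _ => integral_exp_sub_one_sub_nonneg v,
    isRem_integral_exp_sub_one_sub hνsupp hν2,
    isRem_integral_exp_neg_mul_sub_one_mul_one_sub_cos
      (integrable_abs_exp_sub_one_mul_abs hζ hνsupp hν2 hνexp),
    ⟨_, fun _ _ _ _ => le_rfl⟩,
    fun u z _ hv => re_psi_sub_psi μ σ hζ hνsupp hν2 hνexp u z hv⟩

/-- Lemma 3: expansion of `Re(ψ(v+iu) − ψ(−ζ−iz))`. -/
theorem stmt_2 (μ σ ζ : ℝ) (ν : Measure ℝ) [SigmaFinite ν]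
    (hσ : 0 < σ) (hζ : 0 ≤ ζ)
    (hνsupp : ν (Set.Ici (0 : ℝ)) = 0)
    (hν2 : Integrable (fun x : ℝ => x ^ 2) ν)
    (hνexp : IntegrableOn (fun x : ℝ => |x| * Real.exp (-ζ * x)) (Set.Iio (-1 : ℝ)) ν) :
    ∃ R₁ R₂ R₃ R₄ R₅ : ℝ → ℝ → ℝ → ℝ,
      IsRem R₁ (fun u _ z => z ^ 2 - u ^ 2) ∧
      (∀ (u z : ℝ) (v : ℝ), 0 < v → 0 ≤ R₂ u v z) ∧
      IsRem R₂ (fun u v _ => u * v) ∧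
      (∀ (u z : ℝ) (v : ℝ), 0 < v → 0 ≤ R₃ u v z) ∧
      IsRem R₃ (fun _ v _ => v ^ 2) ∧
      IsRem R₄ (fun _ _ z => z) ∧
      (∃ C : ℝ, ∀ (u z : ℝ) (v : ℝ), 0 < v → |R₅ u v z| ≤ C) ∧
      ∀ (u z : ℝ) (v : ℝ), 0 < v →
        (psi μ σ ν ((v : ℂ) + Complex.I * (u : ℂ)) -
            psi μ σ ν (-(ζ : ℂ) - Complex.I * (z : ℂ))).re
          = μ * (v + ζ) + (v ^ 2 + z ^ 2 - u ^ 2) * σ ^ 2 / 2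
            + R₁ u v z + R₂ u v z + R₃ u v z + R₄ u v z + R₅ u v z :=
  stmt_2_general μ σ ζ ν hζ hνsupp hν2 hνexp
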